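/- arXiv:2509.22035 — 3 statements merged into one kernel-verified Lean document; each statement's English description precedes it below -/
import Mathlib

section
/- Let 1 < p < ∞ and d ≥ 1, and let P be the unique minimizer of ‖Q‖_p^p among polynomials Q of degree at most d with Q(1) = 1. Then P has exact degree d. -/
/-!
If the minimizer `P` had degree `< d`, then `Q(z) = (1 + z) / 2 · P(z)` would still be admissible.
On the unit circle `|(1 + z) / 2| ≤ 1`, with equality only at `z = 1`, so `|Q| ≤ |P|` there, strictly
wherever `z ≠ 1` and `P(z) ≠ 0`; such points exist since `P ≠ 0`. Hence `‖Q‖_p < ‖P‖_p`.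
-/

noncomputable def pNormPow (p : ℝ) (P : Polynomial ℂ) : ℝ :=
  (1 / (2 * Real.pi)) *
    ∫ θ in (-Real.pi)..Real.pi, ‖P.eval (Complex.exp (θ * Complex.I))‖ ^ p

open Polynomial Complex Real Set

theorem Complex.norm_one_add_lt_two {w : ℂ} (hw : ‖w‖ = 1) (hw1 : w ≠ 1) : ‖1 + w‖ < 2 := by
  have hle : ‖1 + w‖ ≤ 2 := by
    simpa [hw, one_add_one_eq_two] using norm_add_le (1 : ℂ) w
  refine hle.lt_of_ne fun h => hw1 (eq_of_norm_eq_of_norm_add_eq ?_ ?_).symm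
  · rw [norm_one, hw]
  · rw [h, norm_one, hw]; norm_num

theorem Polynomial.exists_not_isRoot_exp_mul_I {R : ℂ[X]} (hR : R ≠ 0) :
    ∃ θ ∈ Ioc (-π) π, ¬ R.IsRoot (exp (θ * I)) := by
  have hinj : InjOn (fun θ : ℝ => exp (θ * I)) (Ioc (-π) π) := fun x hx y hy hxy =>
    Circle.exp_injOn_Ioc (by linarith) hx hy (Subtype.ext (by simpa using hxy))
  have hcircle : ((fun θ : ℝ => exp (θ * I)) '' Ioc (-π) π).Infinite :=
    (Ioc_infinite (by linarith [pi_pos])).image hinj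
  obtain ⟨_, ⟨θ, hθ, rfl⟩, hroot⟩ := hcircle.exists_notMem_finite (finite_setOfPred_isRoot hR)
  exact ⟨θ, hθ, hroot⟩

theorem continuous_norm_eval_exp_mul_I_rpow {p : ℝ} (hp : 0 ≤ p) (P : ℂ[X]) :
    Continuous fun θ : ℝ => ‖P.eval (exp (θ * I))‖ ^ p :=
  ((P.continuous.comp (by fun_prop)).norm).rpow_const fun _ => Or.inr hp

theorem pNormPow_lt_pNormPow {p : ℝ} (hp : 0 < p) {P Q : ℂ[X]}
    (hle : ∀ θ : ℝ, ‖Q.eval (exp (θ * I))‖ ≤ ‖P.eval (exp (θ * I))‖)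
    (hlt : ∃ θ ∈ Icc (-π) π, ‖Q.eval (exp (θ * I))‖ < ‖P.eval (exp (θ * I))‖) :
    pNormPow p Q < pNormPow p P := by
  obtain ⟨θ, hθ, hθlt⟩ := hlt
  have hint := intervalIntegral.integral_lt_integral_of_continuousOn_of_le_of_exists_lt
    (by linarith [pi_pos]) (continuous_norm_eval_exp_mul_I_rpow hp.le Q).continuousOn
    (continuous_norm_eval_exp_mul_I_rpow hp.le P).continuousOn
    (fun θ _ => rpow_le_rpow (norm_nonneg _) (hle θ) hp.le)
    ⟨θ, hθ, rpow_lt_rpow (norm_nonneg _) hθlt hp⟩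
  exact mul_lt_mul_of_pos_left hint (by positivity)

theorem pNormPow_half_one_add_X_mul_lt {p : ℝ} (hp : 0 < p) {P : ℂ[X]} (hP : P ≠ 0) :
    pNormPow p (C (1 / 2) * (1 + X) * P) < pNormPow p P := by
  have heval : ∀ θ : ℝ, ‖(C (1 / 2) * (1 + X) * P).eval (exp (θ * I))‖
      = ‖1 + exp (θ * I)‖ / 2 * ‖P.eval (exp (θ * I))‖ := fun θ => by
    simp only [eval_mul, eval_C, eval_add, eval_one, eval_X, norm_mul]
    norm_num [div_eq_inv_mul]
  apply pNormPow_lt_pNormPow hp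
  · intro θ
    rw [heval]
    refine mul_le_of_le_one_left (norm_nonneg _) ?_
    have := norm_add_le (1 : ℂ) (exp (θ * I))
    rw [norm_one, norm_exp_ofReal_mul_I] at this
    linarith
  · obtain ⟨θ, hθ, hroot⟩ := exists_not_isRoot_exp_mul_I (mul_ne_zero (X_sub_C_ne_zero 1) hP)
    simp only [IsRoot, eval_mul, eval_sub, eval_X, eval_C, mul_eq_zero, sub_eq_zero,
      not_or] at hroot
    refine ⟨θ, Ioc_subset_Icc_self hθ, ?_⟩
    rw [heval]
    refine mul_lt_of_lt_one_left (norm_pos_iff.2 hroot.2) ?_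
    have := norm_one_add_lt_two (norm_exp_ofReal_mul_I θ) hroot.1
    linarith

theorem stmt4_general (p : ℝ) (hp1 : 1 < p) (d : ℕ) (P : Polynomial ℂ)
    (hdeg : P.natDegree ≤ d) (hval : P.eval 1 = 1)
    (hmin : ∀ Q : Polynomial ℂ, Q.natDegree ≤ d → Q.eval 1 = 1 →
      pNormPow p P ≤ pNormPow p Q) :
    P.natDegree = d := by
  refine hdeg.antisymm (not_lt.1 fun hlt => ?_)
  have hP : P ≠ 0 := by rintro rfl; simp at hval
  refine (pNormPow_half_one_add_X_mul_lt (by linarith) hP).not_ge (hmin _ ?_ ?_)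
  · have hfactor : (C (1 / 2 : ℂ) * (1 + X)).natDegree ≤ 1 := by compute_degree
    exact natDegree_mul_le.trans (by omega)
  · simp only [eval_mul, eval_C, eval_add, eval_one, eval_X, hval]
    norm_num

theorem stmt4 (p : ℝ) (hp1 : 1 < p) (d : ℕ) (hd : 1 ≤ d) (P : Polynomial ℂ)
    (hdeg : P.natDegree ≤ d) (hval : P.eval 1 = 1)
    (hmin : ∀ Q : Polynomial ℂ, Q.natDegree ≤ d → Q.eval 1 = 1 →
      pNormPow p P ≤ pNormPow p Q) :
    P.natDegree = d :=
  stmt4_general p hp1 d P hdeg hval hmin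
end

section
/- Let 1 < p < ∞ and d ≥ 1, and let P be the unique minimizer of ‖Q‖_p^p among polynomials of degree at most d with Q(1) = 1. Then all zeroes of P lie on the unit circle, and P(e^{iθ}) = conjugate of P(e^{-iθ}) for all θ (equivalently, P has real coefficients). -/
open Polynomial MeasureTheory Set
open scoped ComplexConjugate Real

section MidpointRpow

variable {p a b : ℝ}

theorem rpow_add_div_two_le (hp : 1 ≤ p) (ha : 0 ≤ a) (hb : 0 ≤ b) :
    ((a + b) / 2) ^ p ≤ (a ^ p + b ^ p) / 2 := by
  have h := (convexOn_rpow hp).2 ha hb (by norm_num : (0 : ℝ) ≤ 1 / 2)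
    (by norm_num : (0 : ℝ) ≤ 1 / 2) (by norm_num)
  simp only [smul_eq_mul] at h
  rw [show (a + b) / 2 = 1 / 2 * a + 1 / 2 * b by ring,
    show (a ^ p + b ^ p) / 2 = 1 / 2 * a ^ p + 1 / 2 * b ^ p by ring]
  exact h

theorem rpow_add_div_two_lt (hp : 1 < p) (ha : 0 ≤ a) (hb : 0 ≤ b) (hab : a ≠ b) :
    ((a + b) / 2) ^ p < (a ^ p + b ^ p) / 2 := by
  have h := (strictConvexOn_rpow hp).2 ha hb hab (by norm_num : (0 : ℝ) < 1 / 2)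
    (by norm_num : (0 : ℝ) < 1 / 2) (by norm_num)
  simp only [smul_eq_mul] at h
  rw [show (a + b) / 2 = 1 / 2 * a + 1 / 2 * b by ring,
    show (a ^ p + b ^ p) / 2 = 1 / 2 * a ^ p + 1 / 2 * b ^ p by ring]
  exact h

variable {E : Type*}

theorem rpow_norm_add_div_two_le [SeminormedAddCommGroup E] (hp : 1 ≤ p) (u v : E) :
    (‖u + v‖ / 2) ^ p ≤ (‖u‖ ^ p + ‖v‖ ^ p) / 2 :=
  calc (‖u + v‖ / 2) ^ p ≤ ((‖u‖ + ‖v‖) / 2) ^ p :=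
        Real.rpow_le_rpow (by positivity) (by linarith [norm_add_le u v]) (by linarith)
    _ ≤ (‖u‖ ^ p + ‖v‖ ^ p) / 2 := rpow_add_div_two_le hp (norm_nonneg u) (norm_nonneg v)

theorem eq_of_rpow_norm_add_div_two_eq [NormedAddCommGroup E] [NormedSpace ℝ E]
    [StrictConvexSpace ℝ E] (hp : 1 < p) {u v : E}
    (h : (‖u + v‖ / 2) ^ p = (‖u‖ ^ p + ‖v‖ ^ p) / 2) : u = v := by
  have hp0 : 0 < p := by linarith
  have htri : ‖u + v‖ / 2 ≤ (‖u‖ + ‖v‖) / 2 := by linarith [norm_add_le u v]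
  have hmono := Real.rpow_le_rpow (by positivity) htri hp0.le
  have hnorm : ‖u‖ = ‖v‖ := by
    by_contra hne
    linarith [rpow_add_div_two_lt hp (norm_nonneg u) (norm_nonneg v) hne]
  have hhalf : ‖u + v‖ / 2 = ‖u‖ := by
    refine Real.rpow_left_injOn hp0.ne' (by positivity : 0 ≤ ‖u + v‖ / 2) (norm_nonneg u) ?_
    simp only [h, ← hnorm, add_self_div_two]
  exact eq_of_norm_eq_of_norm_add_eq hnorm (by linarith)

end MidpointRpow

theorem Set.infinite_sep_of_ae_restrict {α : Type*} [MeasurableSpace α] {μ : Measure α}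
    [NullSingletonClass μ] {s : Set α} {q : α → Prop} (hs : MeasurableSet s) (hμs : μ s ≠ 0)
    (h : ∀ᵐ x ∂μ.restrict s, q x) : {x ∈ s | q x}.Infinite := by
  intro hfin
  have hnot : ∀ᵐ x ∂μ.restrict s, x ∉ {x ∈ s | q x} :=
    ae_restrict_of_ae (measure_eq_zero_iff_ae_notMem.1 (hfin.measure_zero μ))
  have hfalse : ∀ᵐ _ ∂μ.restrict s, False := by
    filter_upwards [ae_restrict_mem hs, h, hnot] with x hxs hqx hx using hx ⟨hxs, hqx⟩
  rw [Filter.eventually_false_iff_eq_bot, ae_eq_bot, Measure.restrict_eq_zero] at hfalse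
  exact hμs hfalse

theorem Polynomial.eq_of_ae_eval_exp_eq {a b : ℝ} (hab : a < b) (hba : b - a ≤ 2 * π)
    {P Q : ℂ[X]} (h : ∀ᵐ θ : ℝ ∂volume.restrict (Ioc a b),
      P.eval (Complex.exp (θ * Complex.I)) = Q.eval (Complex.exp (θ * Complex.I))) :
    P = Q := by
  have hS := infinite_sep_of_ae_restrict measurableSet_Ioc (by simp [hab]) h
  have hinj : InjOn (fun θ : ℝ => Complex.exp (θ * Complex.I)) (Ioc a b) :=
    Subtype.val_injective.comp_injOn (Circle.exp_injOn_Ioc hba)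
  rw [← sub_eq_zero]
  refine eq_zero_of_infinite_isRoot _ ((hS.image (hinj.mono fun _ h => h.1)).mono ?_)
  rintro _ ⟨θ, ⟨-, hθ⟩, rfl⟩
  simp [hθ]

section CircleNorm

variable {p : ℝ}

theorem continuous_rpow_norm_eval_exp (hp : 0 ≤ p) (P : ℂ[X]) :
    Continuous fun θ : ℝ => ‖P.eval (Complex.exp (θ * Complex.I))‖ ^ p :=
  (by fun_prop : Continuous fun θ : ℝ => ‖P.eval (Complex.exp (θ * Complex.I))‖).rpow_const
    fun _ => Or.inr hp

theorem pNormPow_congr {P Q : ℂ[X]} (h : ∀ z : ℂ, ‖z‖ = 1 → ‖Q.eval z‖ = ‖P.eval z‖) :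
    pNormPow p Q = pNormPow p P := by
  unfold pNormPow
  congr 1
  refine intervalIntegral.integral_congr fun θ _ => ?_
  simp only [h _ (Complex.norm_exp_ofReal_mul_I θ)]

theorem eval_map_conj_exp (P : ℂ[X]) (θ : ℝ) :
    (P.map (starRingEnd ℂ)).eval (Complex.exp (θ * Complex.I)) =
      conj (P.eval (Complex.exp (-θ * Complex.I))) := by
  rw [← eval_map_apply, ← Complex.exp_conj]
  simp

theorem pNormPow_map_conj (P : ℂ[X]) : pNormPow p (P.map (starRingEnd ℂ)) = pNormPow p P := by
  unfold pNormPow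
  congr 1
  simp_rw [eval_map_conj_exp, Complex.norm_conj]
  have := intervalIntegral.integral_comp_neg
    (a := -π) (b := π) fun θ : ℝ => ‖P.eval (Complex.exp (θ * Complex.I))‖ ^ p
  simpa using this

theorem norm_one_sub_conj_mul {z : ℂ} (hz : ‖z‖ = 1) (a : ℂ) : ‖1 - conj a * z‖ = ‖z - a‖ := by
  have hzz : z * conj z = 1 := by
    rw [Complex.mul_conj, Complex.normSq_eq_norm_sq, hz]
    norm_num
  have hfactor : 1 - conj a * z = z * conj (z - a) := by
    rw [map_sub]
    linear_combination -hzz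
  rw [hfactor, norm_mul, Complex.norm_conj, hz, one_mul]

end CircleNorm

section Minimizer

variable {p : ℝ} {d : ℕ} {P Q : ℂ[X]}

theorem eq_of_pNormPow_add_le_two_mul_pNormPow_smul_add (hp : 1 < p)
    (h : pNormPow p P + pNormPow p Q ≤ 2 * pNormPow p ((2⁻¹ : ℂ) • (P + Q))) : P = Q := by
  set F : ℂ[X] → ℝ → ℝ := fun R θ => ‖R.eval (Complex.exp (θ * Complex.I))‖ ^ p
  have hF : ∀ R, Continuous (F R) := continuous_rpow_norm_eval_exp (by linarith)
  have hmid : ∀ θ, F ((2⁻¹ : ℂ) • (P + Q)) θ =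
      (‖P.eval (Complex.exp (θ * Complex.I)) + Q.eval (Complex.exp (θ * Complex.I))‖ / 2) ^ p := by
    intro θ
    simp [F, ← mul_add, div_eq_inv_mul]
  have hle : F ((2⁻¹ : ℂ) • (P + Q)) ≤ fun θ => (F P θ + F Q θ) / 2 := fun θ =>
    (hmid θ).trans_le (rpow_norm_add_div_two_le hp.le _ _)
  have hint : ∫ θ in Ioc (-π) π, F ((2⁻¹ : ℂ) • (P + Q)) θ =
      ∫ θ in Ioc (-π) π, (F P θ + F Q θ) / 2 := by
    refine le_antisymm (integral_mono ((hF _).integrableOn_Ioc)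
      (((hF P).add (hF Q)).div_const 2).integrableOn_Ioc hle) ?_
    rw [integral_div, integral_add (hF P).integrableOn_Ioc (hF Q).integrableOn_Ioc]
    simp only [pNormPow, intervalIntegral.integral_of_le (neg_le_self Real.pi_pos.le)] at h
    have hc : 0 < 1 / (2 * π) := by positivity
    nlinarith
  have hae := (integral_eq_iff_of_ae_le (hF _).integrableOn_Ioc
    (((hF P).add (hF Q)).div_const 2).integrableOn_Ioc (Filter.Eventually.of_forall hle)).1 hint
  refine eq_of_ae_eval_exp_eq (a := -π) (b := π) (by linarith [Real.pi_pos]) (by linarith) ?_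
  filter_upwards [hae] with θ hθ
  exact eq_of_rpow_norm_add_div_two_eq hp ((hmid θ).symm.trans hθ)

theorem eq_of_pNormPow_eq_of_isMin (hp : 1 < p) (hP : P.natDegree ≤ d) (hP1 : P.eval 1 = 1)
    (hmin : ∀ Q : ℂ[X], Q.natDegree ≤ d → Q.eval 1 = 1 → pNormPow p P ≤ pNormPow p Q)
    (hQ : Q.natDegree ≤ d) (hQ1 : Q.eval 1 = 1) (hQP : pNormPow p Q = pNormPow p P) : Q = P := by
  refine (eq_of_pNormPow_add_le_two_mul_pNormPow_smul_add hp ?_).symm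
  have := hmin ((2⁻¹ : ℂ) • (P + Q)) ((natDegree_smul_le _ _).trans
    (natDegree_add_le_of_degree_le hP hQ)) (by simp [hP1, hQ1]; norm_num)
  linarith

theorem norm_eq_one_of_isRoot_of_pNormPow_unique (hP : P.natDegree ≤ d) (hP1 : P.eval 1 = 1)
    (huniq : ∀ Q : ℂ[X], Q.natDegree ≤ d → Q.eval 1 = 1 → pNormPow p Q = pNormPow p P → Q = P)
    {a : ℂ} (ha : P.IsRoot a) : ‖a‖ = 1 := by
  obtain ⟨R, rfl⟩ := dvd_iff_isRoot.2 ha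
  have hR : R ≠ 0 := by
    rintro rfl
    simp at hP1
  have ha1 : 1 - a ≠ 0 := by
    rintro h
    simp [h] at hP1
  have ha1' : 1 - conj a ≠ 0 := by
    rwa [← map_one (starRingEnd ℂ), ← map_sub, _root_.map_ne_zero]
  set c := (1 - a) / (1 - conj a) with hc_def
  have hc : ‖c‖ = 1 := by
    rw [norm_div, ← Complex.norm_conj (1 - conj a), map_sub, map_one, Complex.conj_conj,
      div_self (norm_ne_zero_iff.2 ha1)]
  have hQ : C c * (1 - C (conj a) * X) * R = (X - C a) * R := by
    refine huniq _ ?_ ?_ ?_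
    · calc (C c * (1 - C (conj a) * X) * R).natDegree
          ≤ (C c * (1 - C (conj a) * X)).natDegree + R.natDegree := natDegree_mul_le
        _ ≤ 1 + R.natDegree := by gcongr; compute_degree
        _ = ((X - C a) * R).natDegree := by
          rw [natDegree_mul (X_sub_C_ne_zero a) hR, natDegree_X_sub_C]
        _ ≤ d := hP
    · simp only [eval_mul, eval_C, eval_sub, eval_one, eval_X, mul_one] at hP1 ⊢
      rw [hc_def, div_mul_cancel₀ _ ha1']
      exact hP1
    · refine pNormPow_congr fun z hz => ?_
      simp [norm_one_sub_conj_mul hz, hc]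
  have hfactor := congrArg (eval a) (mul_right_cancel₀ hR hQ)
  simp only [eval_mul, eval_C, eval_sub, eval_one, eval_X, sub_self] at hfactor
  have hconj : 1 - conj a * a = 0 :=
    (mul_eq_zero.1 hfactor).resolve_left fun h => by simp [h] at hc
  have hsq : ‖a‖ ^ 2 = 1 := by
    rw [← Complex.ofReal_inj, Complex.ofReal_pow, ← Complex.conj_mul']
    push_cast
    linear_combination -hconj
  exact (pow_eq_one_iff_of_nonneg (norm_nonneg a) two_ne_zero).1 hsq

theorem map_conj_eq_self_of_pNormPow_unique (hP : P.natDegree ≤ d) (hP1 : P.eval 1 = 1)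
    (huniq : ∀ Q : ℂ[X], Q.natDegree ≤ d → Q.eval 1 = 1 → pNormPow p Q = pNormPow p P → Q = P) :
    P.map (starRingEnd ℂ) = P :=
  huniq _ (by rwa [natDegree_map_eq_of_injective (RingHom.injective _)])
    (by rw [← map_one (starRingEnd ℂ), eval_map_apply, hP1, map_one]) (pNormPow_map_conj P)

end Minimizer

theorem stmt5_general (p : ℝ) (hp1 : 1 < p) (d : ℕ) (P : Polynomial ℂ)
    (hdeg : P.natDegree ≤ d) (hval : P.eval 1 = 1)
    (hmin : ∀ Q : Polynomial ℂ, Q.natDegree ≤ d → Q.eval 1 = 1 →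
      pNormPow p P ≤ pNormPow p Q) :
    (∀ z : ℂ, P.eval z = 0 → ‖z‖ = 1) ∧
    (∀ θ : ℝ, P.eval (Complex.exp (θ * Complex.I)) =
      starRingEnd ℂ (P.eval (Complex.exp (-θ * Complex.I)))) := by
  have huniq : ∀ Q : ℂ[X], Q.natDegree ≤ d → Q.eval 1 = 1 → pNormPow p Q = pNormPow p P →
      Q = P := fun _ => eq_of_pNormPow_eq_of_isMin hp1 hdeg hval hmin
  refine ⟨fun z hz => norm_eq_one_of_isRoot_of_pNormPow_unique hdeg hval huniq hz, fun θ => ?_⟩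
  rw [← eval_map_conj_exp, map_conj_eq_self_of_pNormPow_unique hdeg hval huniq]

theorem stmt5 (p : ℝ) (hp1 : 1 < p) (d : ℕ) (hd : 1 ≤ d) (P : Polynomial ℂ)
    (hdeg : P.natDegree ≤ d) (hval : P.eval 1 = 1)
    (hmin : ∀ Q : Polynomial ℂ, Q.natDegree ≤ d → Q.eval 1 = 1 →
      pNormPow p P ≤ pNormPow p Q) :
    (∀ z : ℂ, P.eval z = 0 → ‖z‖ = 1) ∧
    (∀ θ : ℝ, P.eval (Complex.exp (θ * Complex.I)) =
      starRingEnd ℂ (P.eval (Complex.exp (-θ * Complex.I)))) :=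
  stmt5_general p hp1 d P hdeg hval hmin
end

section
/- Let 2 ≤ p ≤ 4 and let P be the unique minimizer of ‖Q‖_p^p among polynomials Q of degree at most 4 with Q(1) = 1, whose zeroes are e^{±it_1}, e^{±it_2} with 0 < t_1 ≤ t_2 ≤ π. Then t_2 ≥ π/2. -/
/-!
On the unit circle `|(z - e^{is})(z - e^{-is})| = 2 |cos θ - cos s|` for `z = e^{iθ}`, so the
`L^p` norm of `C a * (z - e^{±it₁})(z - e^{±it₂})` is `(4‖a‖)^p` times an integral of
`|cos θ - cos t₁|^p |cos θ - cos t₂|^p`. Reflecting `tᵢ ↦ π - tᵢ` flips the signs of `cos tᵢ`,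
which the shift `θ ↦ θ + π` shows leaves the integral unchanged, while the normalisation
`Q(1) = 1` forces `‖a‖ = 1 / (4 (1 - cos t₁)(1 - cos t₂))`. If `t₂ < π/2` both cosines are
positive, so the reflected polynomial, with `1 + cos tᵢ` in place of `1 - cos tᵢ`, has strictly
smaller norm.
-/

open Complex Polynomial
open scoped Real

noncomputable def rootPair (s : ℝ) : ℂ[X] :=
  (X - C (exp (s * I))) * (X - C (exp (-s * I)))

lemma eval_rootPair_exp_mul_I (s θ : ℝ) :
    (rootPair s).eval (exp (θ * I)) = 2 * ((Real.cos θ - Real.cos s : ℝ) : ℂ) * exp (θ * I) := by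
  have hθ : exp (θ * I) * exp (-θ * I) = 1 := by rw [← exp_add]; simp
  have hs : exp (s * I) * exp (-s * I) = 1 := by rw [← exp_add]; simp
  simp only [rootPair, eval_mul, eval_sub, eval_X, eval_C]
  push_cast
  rw [Complex.cos, Complex.cos]
  linear_combination hs - hθ

lemma eval_rootPair_one (s : ℝ) : (rootPair s).eval 1 = 2 * ((1 - Real.cos s : ℝ) : ℂ) := by
  simpa using eval_rootPair_exp_mul_I s 0

lemma norm_eval_rootPair_exp_mul_I (s θ : ℝ) :
    ‖(rootPair s).eval (exp (θ * I))‖ = 2 * |Real.cos θ - Real.cos s| := by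
  rw [eval_rootPair_exp_mul_I, norm_mul, norm_exp_ofReal_mul_I, norm_mul, norm_real,
    Real.norm_eq_abs]
  norm_num

lemma natDegree_C_mul_rootPair_mul_le (a : ℂ) (s₁ s₂ : ℝ) :
    (C a * (rootPair s₁ * rootPair s₂)).natDegree ≤ 4 := by
  unfold rootPair
  compute_degree

noncomputable def cosIntegral (p x y : ℝ) : ℝ :=
  ∫ θ in (-π)..π, |Real.cos θ - x| ^ p * |Real.cos θ - y| ^ p

lemma cosIntegral_neg_neg (p x y : ℝ) : cosIntegral p (-x) (-y) = cosIntegral p x y := by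
  set f : ℝ → ℝ := fun θ ↦ |Real.cos θ - x| ^ p * |Real.cos θ - y| ^ p
  have hf : Function.Periodic f (2 * π) := fun θ ↦ by simp only [f, Real.cos_add_two_pi]
  have hshift : cosIntegral p (-x) (-y) = ∫ θ in (-π)..π, f (θ + π) := by
    refine intervalIntegral.integral_congr fun θ _ ↦ ?_
    simp only [f, Real.cos_add_pi]
    rw [← abs_neg (Real.cos θ - -x), ← abs_neg (Real.cos θ - -y)]
    ring_nf
  have hperiod := hf.intervalIntegral_add_eq 0 (-π)
  rw [hshift, intervalIntegral.integral_comp_add_right f π, neg_add_cancel, ← two_mul]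
  rw [zero_add, show -π + 2 * π = π by ring] at hperiod
  exact hperiod

lemma cosIntegral_pos {p x y : ℝ} (hp : 0 ≤ p) (hx : 0 ≤ x) (hy : 0 ≤ y) :
    0 < cosIntegral p x y := by
  set f : ℝ → ℝ := fun θ ↦ |Real.cos θ - x| ^ p * |Real.cos θ - y| ^ p
  have hf : Continuous f := by fun_prop (disch := exact fun _ ↦ Or.inr hp)
  have hf_nonneg : ∀ θ, 0 ≤ f θ := fun θ ↦ by positivity
  -- `cos` is negative on `(π/2, π)`, so `f` does not vanish there
  have hpos : 0 < ∫ θ in (π / 2)..π, f θ := by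
    refine intervalIntegral.intervalIntegral_pos_of_pos_on (hf.intervalIntegrable _ _)
      (fun θ hθ ↦ ?_) (by linarith [Real.pi_pos])
    have hcos := Real.cos_neg_of_pi_div_two_lt_of_lt hθ.1 (by linarith [hθ.2, Real.pi_pos])
    exact mul_pos (Real.rpow_pos_of_pos (abs_pos.2 (by linarith)) p)
      (Real.rpow_pos_of_pos (abs_pos.2 (by linarith)) p)
  have hrest : 0 ≤ ∫ θ in (-π)..(π / 2), f θ :=
    intervalIntegral.integral_nonneg (by linarith [Real.pi_pos]) fun θ _ ↦ hf_nonneg θ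
  rw [cosIntegral, ← intervalIntegral.integral_add_adjacent_intervals
    (hf.intervalIntegrable (-π) (π / 2)) (hf.intervalIntegrable _ _)]
  linarith

lemma pNormPow_C_mul_rootPair_mul (p : ℝ) (a : ℂ) (s₁ s₂ : ℝ) :
    pNormPow p (C a * (rootPair s₁ * rootPair s₂)) =
      (4 * ‖a‖) ^ p * cosIntegral p (Real.cos s₁) (Real.cos s₂) / (2 * π) := by
  have hnorm : ∀ θ : ℝ, ‖(C a * (rootPair s₁ * rootPair s₂)).eval (exp (θ * I))‖ =
      4 * ‖a‖ * (|Real.cos θ - Real.cos s₁| * |Real.cos θ - Real.cos s₂|) := fun θ ↦ by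
    rw [eval_mul, eval_mul, eval_C, norm_mul, norm_mul, norm_eval_rootPair_exp_mul_I,
      norm_eval_rootPair_exp_mul_I]
    ring
  calc pNormPow p (C a * (rootPair s₁ * rootPair s₂))
      = 1 / (2 * π) * ∫ θ in (-π)..π, (4 * ‖a‖) ^ p *
          (|Real.cos θ - Real.cos s₁| ^ p * |Real.cos θ - Real.cos s₂| ^ p) := by
        refine congrArg _ (intervalIntegral.integral_congr fun θ _ ↦ ?_)
        simp only [hnorm]
        rw [Real.mul_rpow (by positivity) (by positivity),
          Real.mul_rpow (abs_nonneg _) (abs_nonneg _)]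
    _ = _ := by rw [intervalIntegral.integral_const_mul, cosIntegral]; ring

lemma eval_one_C_mul_rootPair_mul (a : ℂ) (s₁ s₂ : ℝ) :
    (C a * (rootPair s₁ * rootPair s₂)).eval 1 =
      4 * a * (((1 - Real.cos s₁) * (1 - Real.cos s₂) : ℝ) : ℂ) := by
  rw [eval_mul, eval_mul, eval_C, eval_rootPair_one, eval_rootPair_one]
  push_cast
  ring

lemma one_sub_cos_mul_one_sub_cos_nonneg (s₁ s₂ : ℝ) :
    0 ≤ (1 - Real.cos s₁) * (1 - Real.cos s₂) :=
  mul_nonneg (sub_nonneg.2 (Real.cos_le_one _)) (sub_nonneg.2 (Real.cos_le_one _))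

lemma pNormPow_of_eval_one_eq_one (p : ℝ) {a : ℂ} {s₁ s₂ : ℝ}
    (h : (C a * (rootPair s₁ * rootPair s₂)).eval 1 = 1) :
    pNormPow p (C a * (rootPair s₁ * rootPair s₂)) =
      ((1 - Real.cos s₁) * (1 - Real.cos s₂)) ^ (-p) *
        cosIntegral p (Real.cos s₁) (Real.cos s₂) / (2 * π) := by
  have hnonneg := one_sub_cos_mul_one_sub_cos_nonneg s₁ s₂
  have ha : 4 * ‖a‖ = ((1 - Real.cos s₁) * (1 - Real.cos s₂))⁻¹ := by
    have := congrArg norm h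
    rw [eval_one_C_mul_rootPair_mul, norm_mul, norm_mul, norm_real, Real.norm_of_nonneg hnonneg,
      norm_one] at this
    norm_num at this
    exact eq_inv_of_mul_eq_one_left this
  rw [pNormPow_C_mul_rootPair_mul, ha, Real.inv_rpow hnonneg, Real.rpow_neg hnonneg]

lemma exists_pNormPow_lt_of_cos_pos {p : ℝ} (hp : 0 < p) {a : ℂ} {s₁ s₂ : ℝ}
    (hs₁ : 0 < Real.cos s₁) (hs₂ : 0 < Real.cos s₂)
    (h : (C a * (rootPair s₁ * rootPair s₂)).eval 1 = 1) :
    ∃ Q : ℂ[X], Q.natDegree ≤ 4 ∧ Q.eval 1 = 1 ∧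
      pNormPow p Q < pNormPow p (C a * (rootPair s₁ * rootPair s₂)) := by
  set c₁ := Real.cos s₁
  set c₂ := Real.cos s₂
  have hpos : 0 < (1 - c₁) * (1 - c₂) := by
    refine (one_sub_cos_mul_one_sub_cos_nonneg s₁ s₂).lt_of_ne fun h0 ↦ ?_
    rw [eval_one_C_mul_rootPair_mul, ← h0] at h
    simp at h
  have hne : (((1 + c₁) * (1 + c₂) : ℝ) : ℂ) ≠ 0 := ofReal_ne_zero.2 (by positivity)
  set Q := C (4 * (((1 + c₁) * (1 + c₂) : ℝ) : ℂ))⁻¹ * (rootPair (π - s₁) * rootPair (π - s₂))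
  have hQ : Q.eval 1 = 1 := by
    rw [eval_one_C_mul_rootPair_mul, Real.cos_pi_sub, Real.cos_pi_sub,
      show (1 - -c₁) * (1 - -c₂) = (1 + c₁) * (1 + c₂) by ring]
    field_simp
  refine ⟨Q, natDegree_C_mul_rootPair_mul_le _ _ _, hQ, ?_⟩
  rw [pNormPow_of_eval_one_eq_one p hQ, pNormPow_of_eval_one_eq_one p h, Real.cos_pi_sub,
    Real.cos_pi_sub, cosIntegral_neg_neg, sub_neg_eq_add, sub_neg_eq_add]
  have hK := cosIntegral_pos hp.le hs₁.le hs₂.le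
  have hlt : (1 - c₁) * (1 - c₂) < (1 + c₁) * (1 + c₂) := by nlinarith
  have hrpow := Real.rpow_lt_rpow_of_neg hpos hlt (neg_neg_of_pos hp)
  exact div_lt_div_of_pos_right (mul_lt_mul_of_pos_right hrpow hK) (by positivity)

open Polynomial in
theorem stmt8_general (p : ℝ) (hp2 : 2 ≤ p)
    (P : Polynomial ℂ) (hval : P.eval 1 = 1)
    (hmin : ∀ Q : Polynomial ℂ, Q.natDegree ≤ 4 → Q.eval 1 = 1 →
      pNormPow p P ≤ pNormPow p Q)
    (t₁ t₂ : ℝ) (ht1 : 0 < t₁) (ht12 : t₁ ≤ t₂)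
    (c : ℂ)
    (hP : P = Polynomial.C c *
      ((X - Polynomial.C (Complex.exp ((t₁ : ℂ) * Complex.I))) *
       (X - Polynomial.C (Complex.exp (-(t₁ : ℂ) * Complex.I))) *
       (X - Polynomial.C (Complex.exp ((t₂ : ℂ) * Complex.I))) *
       (X - Polynomial.C (Complex.exp (-(t₂ : ℂ) * Complex.I))))) :
    Real.pi / 2 ≤ t₂ := by
  by_contra! ht2
  have hcos : ∀ t, 0 < t → t < π / 2 → 0 < Real.cos t := fun t h0 h1 ↦
    Real.cos_pos_of_mem_Ioo ⟨by linarith [Real.pi_pos], h1⟩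
  have hP' : P = C c * (rootPair t₁ * rootPair t₂) := by rw [hP, rootPair, rootPair]; ring
  rw [hP'] at hval hmin
  obtain ⟨Q, hQdeg, hQ1, hQlt⟩ := exists_pNormPow_lt_of_cos_pos (by linarith : 0 < p)
    (hcos t₁ ht1 (by linarith)) (hcos t₂ (by linarith) ht2) hval
  exact (hmin Q hQdeg hQ1).not_gt hQlt

open Polynomial in
theorem stmt8 (p : ℝ) (hp2 : 2 ≤ p) (hp4 : p ≤ 4)
    (P : Polynomial ℂ) (hdeg : P.natDegree ≤ 4) (hval : P.eval 1 = 1)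
    (hmin : ∀ Q : Polynomial ℂ, Q.natDegree ≤ 4 → Q.eval 1 = 1 →
      pNormPow p P ≤ pNormPow p Q)
    (t₁ t₂ : ℝ) (ht1 : 0 < t₁) (ht12 : t₁ ≤ t₂) (ht2 : t₂ ≤ Real.pi)
    (c : ℂ)
    (hP : P = Polynomial.C c *
      ((X - Polynomial.C (Complex.exp ((t₁ : ℂ) * Complex.I))) *
       (X - Polynomial.C (Complex.exp (-(t₁ : ℂ) * Complex.I))) *
       (X - Polynomial.C (Complex.exp ((t₂ : ℂ) * Complex.I))) *
       (X - Polynomial.C (Complex.exp (-(t₂ : ℂ) * Complex.I))))) :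
    Real.pi / 2 ≤ t₂ :=
  stmt8_general p hp2 P hval hmin t₁ t₂ ht1 ht12 c hP
end
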